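/- Under the assumptions of (i) and (ii) on T in an abelian category A with exact coproducts, the classes L_m stabilize: for each integer m ≥ n one has L_m = L_{m+1}, where L_m is the class of objects with an Add(T)-coresolution of length m. -/

import Mathlib

/-!
An object `X ∈ L_{m+1}` is exactly one sitting in a short exact sequence `0 → X → E₀ → X' → 0`
with `E₀ ∈ Add T` and `X' ∈ L_m`. By (ii), passed to direct summands, `Ext^{>0}(T, -)` vanishes
on `Add T`, so dimension shifting along this sequence turns `Ext^{k+1}(T, X) = 0` into
`Ext^k(T, X') = 0`. Induction on `m` thus reduces `L_{m+1} ∩ {Ext^{m+1}(T, -) = 0} ⊆ L_m` to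
`m = 0`, where `Ext¹(T, X) = 0` lets every coproduct inclusion `T ⟶ X' ∈ Add T` lift to `E₀`;
the sequence splits and `X` is a summand of `E₀`. For `m ≥ n`, condition (i) gives
`Ext^{m+1}(T, X) = 0` for every `X`.
-/

open CategoryTheory Limits

universe w v u

/-- `X` is a direct summand of a coproduct of copies of `T`. -/
def InAdd {A : Type u} [Category.{v} A] [Abelian A] [HasCoproducts.{v} A]
    (T X : A) : Prop :=
  ∃ (ι : Type v) (Y : A), Nonempty ((X ⊞ Y) ≅ ∐ (fun _ : ι => T))

/-- `L ∈ L_m`: there is an exact sequence `0 → L → T^0 → ⋯ → T^m → 0` with all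
`T^j ∈ Add(T)` (encoded by an `ℕ`-indexed sequence vanishing in degrees `> m`). -/
def InLm {A : Type u} [Category.{v} A] [Abelian A] [HasCoproducts.{v} A]
    (T : A) (m : ℕ) (L : A) : Prop :=
  ∃ (E : ℕ → A) (f : L ⟶ E 0) (d : ∀ i : ℕ, E i ⟶ E (i + 1))
    (hw0 : f ≫ d 0 = 0) (hw : ∀ i : ℕ, d i ≫ d (i + 1) = 0),
    (∀ i : ℕ, i ≤ m → InAdd T (E i)) ∧
    (∀ i : ℕ, m < i → IsZero (E i)) ∧
    Mono f ∧
    (ShortComplex.mk f (d 0) hw0).Exact ∧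
    (∀ i : ℕ, (ShortComplex.mk (d i) (d (i + 1)) (hw i)).Exact)

open Abelian ZeroObject

variable {A : Type u} [Category.{v} A] [Abelian A]

namespace CategoryTheory.ShortComplex

lemma exact_mk_comp_mono_iff {X Y Z Z' : A} (f : X ⟶ Y) (g : Y ⟶ Z) (i : Z ⟶ Z') [Mono i]
    (w : f ≫ g = 0) : (mk f (g ≫ i) (by simp [reassoc_of% w])).Exact ↔ (mk f g w).Exact :=
  (exact_iff_of_epi_of_isIso_of_mono
    (⟨𝟙 X, 𝟙 Y, i, by simp, by simp⟩ : mk f g w ⟶ mk f (g ≫ i) _)).symm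

lemma exact_mk_epi_comp_iff {X' X Y Z : A} (p : X' ⟶ X) (f : X ⟶ Y) (g : Y ⟶ Z) [Epi p]
    (w : f ≫ g = 0) : (mk (p ≫ f) g (by simp [w])).Exact ↔ (mk f g w).Exact :=
  exact_iff_of_epi_of_isIso_of_mono (⟨p, 𝟙 Y, 𝟙 Z, by simp, by simp⟩ : mk (p ≫ f) g _ ⟶ mk f g w)

end CategoryTheory.ShortComplex

section Ext

variable [HasExt.{w} A]

lemma CategoryTheory.Abelian.Ext.subsingleton_of_retract {W Z Z' : A} {k : ℕ} (i : Z ⟶ Z')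
    (r : Z' ⟶ Z) (hir : i ≫ r = 𝟙 Z) [Subsingleton (Ext W Z' k)] : Subsingleton (Ext W Z k) := by
  have hretract : Function.LeftInverse (fun e : Ext W Z' k => e.comp (Ext.mk₀ r) (add_zero k))
      (fun e : Ext W Z k => e.comp (Ext.mk₀ i) (add_zero k)) := fun e => by
    simp only [Ext.comp_assoc_of_third_deg_zero, Ext.mk₀_comp_mk₀, hir, Ext.comp_mk₀_id]
  exact hretract.injective.subsingleton

namespace CategoryTheory.ShortComplex.ShortExact

variable {S : ShortComplex A}

lemma exists_lift_of_subsingleton_ext (hS : S.ShortExact) {W : A} [Subsingleton (Ext W S.X₁ 1)]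
    (g : W ⟶ S.X₃) : ∃ g' : W ⟶ S.X₂, g' ≫ S.g = g := by
  obtain ⟨x₂, hx₂⟩ := Ext.covariant_sequence_exact₃ W hS (Ext.mk₀ g) (zero_add 1)
    (Subsingleton.elim _ _)
  obtain ⟨g', rfl⟩ := (Ext.mk₀_bijective _ _).2 x₂
  exact ⟨g', (Ext.mk₀_bijective _ _).1 (by rwa [Ext.mk₀_comp_mk₀] at hx₂)⟩

lemma subsingleton_ext_X₃ (hS : S.ShortExact) (W : A) {k : ℕ} [Subsingleton (Ext W S.X₂ k)]
    [Subsingleton (Ext W S.X₁ (k + 1))] : Subsingleton (Ext W S.X₃ k) :=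
  subsingleton_of_forall_eq 0 fun x => by
    obtain ⟨x₂, rfl⟩ := Ext.covariant_sequence_exact₃ W hS x rfl (Subsingleton.elim _ _)
    rw [Subsingleton.elim x₂ 0, Ext.zero_comp]

end CategoryTheory.ShortComplex.ShortExact

end Ext

section Add

variable [HasCoproducts.{v} A]

lemma inAdd_of_isZero (T : A) {Z : A} (hZ : IsZero Z) : InAdd T Z :=
  ⟨PEmpty, ∐ fun _ : PEmpty => T, ⟨⟨biprod.snd, biprod.inr, biprod.hom_ext' _ _
    (hZ.eq_of_src _ _) (by simp), by simp⟩⟩⟩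

lemma InAdd.of_iso {T X Y : A} (h : InAdd T X) (e : X ≅ Y) : InAdd T Y := by
  obtain ⟨ι, Z, ⟨e'⟩⟩ := h
  exact ⟨ι, Z, ⟨biprod.mapIso e.symm (Iso.refl Z) ≪≫ e'⟩⟩

lemma InAdd.of_biprod {T X Y : A} (h : InAdd T (X ⊞ Y)) : InAdd T X := by
  obtain ⟨ι, Z, ⟨e⟩⟩ := h
  exact ⟨ι, Y ⊞ Z, ⟨(biprod.associator X Y Z).symm ≪≫ e⟩⟩

variable [HasExt.{w} A]

lemma InAdd.subsingleton_ext {T X : A} (h : InAdd T X) {k : ℕ}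
    (hT : ∀ I : Type v, Subsingleton (Ext T (∐ fun _ : I => T) k)) :
    Subsingleton (Ext T X k) := by
  obtain ⟨ι, Y, ⟨e⟩⟩ := h
  have := hT ι
  exact Ext.subsingleton_of_retract (biprod.inl ≫ e.hom) (e.inv ≫ biprod.fst) (by simp)

lemma CategoryTheory.ShortComplex.ShortExact.inAdd_X₁ {T : A} {S : ShortComplex A}
    (hS : S.ShortExact) [Subsingleton (Ext T S.X₁ 1)] (h₂ : InAdd T S.X₂) (h₃ : InAdd T S.X₃) :
    InAdd T S.X₁ := by
  obtain ⟨ι, Y, ⟨e⟩⟩ := h₃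
  choose lifts hlifts using fun a : ι =>
    hS.exists_lift_of_subsingleton_ext (Sigma.ι (fun _ => T) a ≫ e.inv ≫ biprod.fst)
  let s : S.X₃ ⟶ S.X₂ := biprod.inl ≫ e.hom ≫ Limits.Sigma.desc lifts
  have hs : s ≫ S.g = 𝟙 S.X₃ := by
    have : Limits.Sigma.desc lifts ≫ S.g = e.inv ≫ biprod.fst := by
      ext a
      simpa using hlifts a
    simp [s, this]
  exact (h₂.of_iso (ShortComplex.Splitting.ofExactOfSection S hS.exact s hs
    hS.mono_f).isoBinaryBiproduct).of_biprod

end Add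

section Lm

variable [HasCoproducts.{v} A] {T : A}

lemma InLm.succ {m : ℕ} {X : A} (h : InLm T m X) : InLm T (m + 1) X := by
  obtain ⟨E, f, d, hw0, hw, hAdd, hzero, hf, hex0, hex⟩ := h
  refine ⟨E, f, d, hw0, hw, fun i hi => ?_, fun i hi => hzero i (by omega), hf, hex0, hex⟩
  rcases Nat.lt_or_ge m i with hmi | him
  · exact inAdd_of_isZero T (hzero i hmi)
  · exact hAdd i him

lemma inLm_zero_iff {X : A} : InLm T 0 X ↔ InAdd T X := by
  constructor
  · rintro ⟨E, f, d, hw0, hw, hAdd, hzero, hf, hex0, -⟩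
    have : Epi f := hex0.epi_f ((hzero 1 Nat.one_pos).eq_of_tgt _ _)
    have : IsIso f := isIso_of_mono_of_epi f
    exact (hAdd 0 le_rfl).of_iso (asIso f).symm
  · intro hX
    let E : ℕ → A := fun | 0 => X | _ + 1 => 0
    refine ⟨E, 𝟙 X, fun _ => 0, comp_zero, fun _ => comp_zero, fun i hi => ?_, fun i hi => ?_,
      inferInstance, (ShortComplex.exact_iff_epi _ rfl).2 inferInstance,
      fun i => ShortComplex.exact_of_isZero_X₂ _ (isZero_zero A)⟩
    · obtain rfl : i = 0 := by omega
      exact hX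
    · obtain ⟨j, rfl⟩ := Nat.exists_eq_add_of_lt hi
      exact isZero_zero A

lemma InLm.exists_shortExact {m : ℕ} {X : A} (h : InLm T (m + 1) X) :
    ∃ (E₀ X' : A) (f : X ⟶ E₀) (g : E₀ ⟶ X') (w : f ≫ g = 0),
      (ShortComplex.mk f g w).ShortExact ∧ InAdd T E₀ ∧ InLm T m X' := by
  obtain ⟨E, f, d, hw0, hw, hAdd, hzero, hf, hex0, hex⟩ := h
  let g : E 0 ⟶ kernel (d 1) := kernel.lift (d 1) (d 0) (hw 0)
  have hfg : f ≫ g = 0 := by ext; simp [g, hw0]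
  have hS : (ShortComplex.mk f g hfg).Exact := by
    rw [← ShortComplex.exact_mk_comp_mono_iff f g (kernel.ι (d 1))]
    simpa [g] using hex0
  have : Epi g := (hex 0).epi_kernelLift
  refine ⟨E 0, kernel (d 1), f, g, hfg, ⟨hS⟩, hAdd 0 (Nat.zero_le _),
    fun i => E (i + 1), kernel.ι (d 1), fun i => d (i + 1), kernel.condition _, fun i => hw _,
    fun i hi => hAdd _ (by omega), fun i hi => hzero _ (by omega), inferInstance,
    ShortComplex.exact_of_f_is_kernel _ (kernelIsKernel _), fun i => hex _⟩

lemma inLm_succ_of_shortExact {m : ℕ} {X E₀ X' : A} (f : X ⟶ E₀) (g : E₀ ⟶ X') (w : f ≫ g = 0)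
    (hS : (ShortComplex.mk f g w).ShortExact) (hE₀ : InAdd T E₀) (hX' : InLm T m X') :
    InLm T (m + 1) X := by
  obtain ⟨E', f', d', hw0', hw', hAdd', hzero', hf', hex0', hex'⟩ := hX'
  have := hS.mono_f
  have := hS.epi_g
  let E : ℕ → A := fun | 0 => E₀ | i + 1 => E' i
  let d : ∀ i, E i ⟶ E (i + 1) := fun | 0 => g ≫ f' | i + 1 => d' i
  have hw0 : f ≫ d 0 = 0 := by simp [d, reassoc_of% w]
  have hw : ∀ i, d i ≫ d (i + 1) = 0 := fun
    | 0 => show (g ≫ f') ≫ d' 0 = 0 by simp [hw0']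
    | i + 1 => hw' i
  refine ⟨E, f, d, hw0, hw, fun | 0, _ => hE₀ | i + 1, hi => hAdd' i (by omega),
    fun | i + 1, hi => hzero' i (by omega), inferInstance,
    (ShortComplex.exact_mk_comp_mono_iff f g f' w).2 hS.exact,
    fun | 0 => (ShortComplex.exact_mk_epi_comp_iff g f' (d' 0) hw0').2 hex0' | i + 1 => hex' i⟩

theorem inLm_of_inLm_succ_of_subsingleton_ext [HasExt.{w} A]
    (hT : ∀ (I : Type v) (i : ℕ), 0 < i → Subsingleton (Ext T (∐ fun _ : I => T) i)) :
    ∀ (m : ℕ) {X : A}, InLm T (m + 1) X → Subsingleton (Ext T X (m + 1)) → InLm T m X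
  | 0, _, hX, _ => by
    obtain ⟨E₀, X', f, g, w, hS, hE₀, hX'⟩ := hX.exists_shortExact
    exact inLm_zero_iff.2 (hS.inAdd_X₁ hE₀ (inLm_zero_iff.1 hX'))
  | m + 1, _, hX, _ => by
    obtain ⟨E₀, X', f, g, w, hS, hE₀, hX'⟩ := hX.exists_shortExact
    have : Subsingleton (Ext T E₀ (m + 1)) := hE₀.subsingleton_ext fun I => hT I _ m.succ_pos
    have := hS.subsingleton_ext_X₃ T (k := m + 1)
    exact inLm_succ_of_shortExact f g w hS hE₀
      (inLm_of_inLm_succ_of_subsingleton_ext hT m hX' this)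

end Lm

theorem statement6_general (A : Type u) [Category.{v} A] [Abelian A]
    [HasCoproducts.{v} A] [HasExt.{w} A]
    (T : A) (n : ℕ)
    (hi : ∀ (i : ℕ), n < i → ∀ X : A, Subsingleton (Abelian.Ext T X i))
    (hii : ∀ (I : Type v) (i : ℕ), 0 < i →
      Subsingleton (Abelian.Ext T (∐ (fun _ : I => T)) i))
    (m : ℕ) (hm : n ≤ m) (X : A) :
    InLm T m X ↔ InLm T (m + 1) X :=
  ⟨InLm.succ, fun h => inLm_of_inLm_succ_of_subsingleton_ext hii m h (hi (m + 1) (by omega) X)⟩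

/-- under conditions (i) and (ii) on `T` in an abelian category with
exact coproducts, the classes `L_m` stabilize: for each `m ≥ n` one has
`L_m = L_{m+1}`. -/
theorem statement6 (A : Type u) [Category.{v} A] [Abelian A]
    [HasCoproducts.{v} A] [AB4 A] [HasExt.{w} A]
    (T : A) (n : ℕ)
    (hi : ∀ (i : ℕ), n < i → ∀ X : A, Subsingleton (Abelian.Ext T X i))
    (hii : ∀ (I : Type v) (i : ℕ), 0 < i →
      Subsingleton (Abelian.Ext T (∐ (fun _ : I => T)) i))
    (m : ℕ) (hm : n ≤ m) (X : A) :
    InLm T m X ↔ InLm T (m + 1) X :=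
  statement6_general A T n hi hii m hm X
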